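/- arXiv:2508.11841 — 5 statements merged into one kernel-verified Lean document; each statement's English description precedes it below -/
import Mathlib

section
/- The relation on p-simplices of the universal complex X(Z_2^n) defined by σ ~ σ' iff either σ = σ' or σ ∩ σ' = {α} for some vertex α with (σ \ {α}) + α = σ' \ {α} (where S + α denotes the set {s + α : s ∈ S}) is an equivalence relation. -/
open Finset

attribute [local instance] Classical.propDecidable

abbrev V (n : ℕ) : Type := Fin n → ZMod 2

def LinIndep {n : ℕ} (s : Finset (V n)) : Prop :=
  LinearIndependent (ZMod 2) (fun x : (s : Set (V n)) => (x : V n))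

def IsSimplex (n p : ℕ) (σ : Finset (V n)) : Prop :=
  σ.card = p + 1 ∧ LinIndep σ

def shift {n : ℕ} (σ : Finset (V n)) (α : V n) : Finset (V n) :=
  σ.image (· + α)

def SimpRel {n : ℕ} (σ σ' : Finset (V n)) : Prop :=
  σ = σ' ∨ ∃ α : V n, σ ∩ σ' = {α} ∧ shift (σ \ {α}) α = σ' \ {α}

lemma addself {n : ℕ} (x : V n) : x + x = 0 := by
  have h2 : (2 : ZMod 2) = 0 := rfl
  rw [← two_smul (ZMod 2) x, h2, zero_smul]

lemma addaddself {n : ℕ} (x α : V n) : x + α + α = x := by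
  rw [add_assoc, addself, add_zero]

lemma mem_shift {n : ℕ} {t : Finset (V n)} {α x : V n} :
    x ∈ shift t α ↔ x + α ∈ t := by
  constructor
  · rintro hx
    rw [shift, Finset.mem_image] at hx
    obtain ⟨y, hy, rfl⟩ := hx
    rwa [addaddself]
  · intro hx
    rw [shift, Finset.mem_image]
    exact ⟨x + α, hx, addaddself x α⟩

lemma shift_shift {n : ℕ} (t : Finset (V n)) (α : V n) : shift (shift t α) α = t := by
  ext x; rw [mem_shift, mem_shift, addaddself]

lemma sum_ne_zero' {n : ℕ} {σ : Finset (V n)} (h : LinIndep σ) {t : Finset (V n)}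
    (hts : t ⊆ σ) (hne : t.Nonempty) : ∑ x ∈ t, x ≠ 0 := by
  intro h0
  rw [LinIndep, linearIndependent_iff'] at h
  obtain ⟨a, ha⟩ := hne
  classical
  let f : {x // x ∈ t} ↪ (σ : Set (V n)) :=
    ⟨fun x => ⟨x.1, hts x.2⟩, by
      rintro ⟨x, hx⟩ ⟨y, hy⟩ hxy
      simpa [Subtype.ext_iff] using congrArg Subtype.val hxy⟩
  have key := h (t.attach.map f) (fun _ => 1)
    (by
      rw [Finset.sum_map]
      simp only [one_smul]
      have : ∀ x : {x // x ∈ t}, ((f x : (σ : Set (V n))) : V n) = x.1 := fun _ => rfl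
      simp only [this]
      rw [Finset.sum_attach t (fun x => x)]
      exact h0)
    ⟨a, hts ha⟩
    (Finset.mem_map.mpr ⟨⟨a, ha⟩, Finset.mem_attach _ _, rfl⟩)
  exact one_ne_zero key

lemma ne_zero' {n : ℕ} {σ : Finset (V n)} (h : LinIndep σ) {a : V n} (ha : a ∈ σ) :
    a ≠ 0 := by
  intro h0
  exact sum_ne_zero' h (t := {a}) (by simpa using ha) ⟨a, Finset.mem_singleton_self a⟩
    (by simpa using h0)

lemma no_add {n : ℕ} {σ : Finset (V n)} (h : LinIndep σ) {a b c : V n}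
    (ha : a ∈ σ) (hb : b ∈ σ) (hc : c ∈ σ) (hsum : a = b + c) : False := by
  have hc' : c = b + a := by rw [hsum, ← add_assoc, addself, zero_add]
  have hb' : b = a + c := by rw [hsum, add_assoc, addself, add_zero]
  by_cases hbc : b = c
  · rw [hbc, addself] at hsum
    exact ne_zero' h ha hsum
  by_cases hab : a = b
  · rw [← hab, addself] at hc'
    exact ne_zero' h hc hc'
  by_cases hac : a = c
  · rw [hac, addself] at hb'
    exact ne_zero' h hb hb'
  have hs : ∑ x ∈ ({a, b, c} : Finset (V n)), x = 0 := by
    rw [Finset.sum_insert (by simp [hab, hac]), Finset.sum_insert (by simp [hbc]),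
      Finset.sum_singleton, ← hsum, addself]
  exact sum_ne_zero' h
    (by intro x hx; simp only [Finset.mem_insert, Finset.mem_singleton] at hx
        rcases hx with rfl | rfl | rfl <;> assumption)
    ⟨a, by simp⟩ hs

/-- the relation `SimpRel` on `p`-simplices of the universal complex
`X(Z_2^n)` is an equivalence relation. -/
theorem stmt0 (n p : ℕ) :
    Equivalence (fun σ σ' : {σ : Finset (V n) // IsSimplex n p σ} => SimpRel σ.1 σ'.1) := by
  constructor
  · intro σ
    exact Or.inl rfl
  · rintro ⟨σ, hσ⟩ ⟨σ', hσ'⟩ (h | ⟨α, h1, h2⟩)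
    · exact Or.inl h.symm
    · refine Or.inr ⟨α, by rw [Finset.inter_comm]; exact h1, ?_⟩
      rw [← h2, shift_shift]
  · rintro ⟨σ, hσ⟩ ⟨σ', hσ'⟩ ⟨σ'', hσ''⟩ hab hbc
    have hσi := hσ.2
    have hσ'i := hσ'.2
    have hσ''i := hσ''.2
    rcases hab with h | ⟨α, h1, h2⟩
    · subst h; exact hbc
    rcases hbc with h | ⟨β, h3, h4⟩
    · subst h; exact Or.inr ⟨α, h1, h2⟩
    have hαmem : α ∈ σ ∩ σ' := by rw [h1]; exact Finset.mem_singleton_self α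
    have hβmem : β ∈ σ' ∩ σ'' := by rw [h3]; exact Finset.mem_singleton_self β
    have hασ : α ∈ σ := (Finset.mem_inter.mp hαmem).1
    have hασ' : α ∈ σ' := (Finset.mem_inter.mp hαmem).2
    have hβσ' : β ∈ σ' := (Finset.mem_inter.mp hβmem).1
    have hβσ'' : β ∈ σ'' := (Finset.mem_inter.mp hβmem).2
    by_cases hβα : β = α
    · subst hβα
      left
      have e : σ'' \ {β} = σ \ {β} := by rw [← h4, ← h2, shift_shift]
      ext x
      by_cases hx : x = β
      · subst hx; simp [hασ, hβσ'']
      constructor <;> intro hmem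
      · have hx1 : x ∈ σ \ {β} := Finset.mem_sdiff.mpr ⟨hmem, by simpa using hx⟩
        rw [← e] at hx1
        exact (Finset.mem_sdiff.mp hx1).1
      · have hx1 : x ∈ σ'' \ {β} := Finset.mem_sdiff.mpr ⟨hmem, by simpa using hx⟩
        rw [e] at hx1
        exact (Finset.mem_sdiff.mp hx1).1
    · right
      have hβα' : α ≠ β := fun h => hβα h.symm
      set γ := α + β with hγ
      have hγα' : γ + α = β := by rw [hγ, add_comm α β, addaddself]
      have hγβa : γ + β = α := by rw [hγ, addaddself]
      have hβα2 : β + α = γ := by rw [← hγα', addaddself]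
      have hβ' : β ∈ σ' \ {α} := Finset.mem_sdiff.mpr ⟨hβσ', by simpa using hβα⟩
      rw [← h2, mem_shift] at hβ'
      rw [hβα2] at hβ'
      have hγσ : γ ∈ σ := (Finset.mem_sdiff.mp hβ').1
      have hγα : γ ≠ α := by simpa using (Finset.mem_sdiff.mp hβ').2
      have hα' : α ∈ σ' \ {β} := Finset.mem_sdiff.mpr ⟨hασ', by simpa using hβα'⟩
      have hγσ''d : γ ∈ σ'' \ {β} := by rw [← h4, mem_shift, hγβa]; exact hα'
      have hγσ'' : γ ∈ σ'' := (Finset.mem_sdiff.mp hγσ''d).1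
      refine ⟨γ, ?_, ?_⟩
      · ext x
        simp only [Finset.mem_inter, Finset.mem_singleton]
        constructor
        · rintro ⟨hxσ, hxσ''⟩
          have hxβ : x ≠ β := by
            rintro rfl
            have : x ∈ σ ∩ σ' := Finset.mem_inter.mpr ⟨hxσ, hβσ'⟩
            rw [h1] at this
            exact hβα (Finset.mem_singleton.mp this)
          have hx1 : x ∈ σ'' \ {β} := Finset.mem_sdiff.mpr ⟨hxσ'', by simpa using hxβ⟩
          rw [← h4, mem_shift] at hx1
          by_cases hyα : x + β = α
          · rw [hγ, ← hyα, addaddself]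
          · have hx2 : x + β ∈ σ' \ {α} :=
              Finset.mem_sdiff.mpr ⟨(Finset.mem_sdiff.mp hx1).1, by simpa using hyα⟩
            rw [← h2, mem_shift] at hx2
            have hx3 : x + β + α ∈ σ := (Finset.mem_sdiff.mp hx2).1
            have heq : (x + β + α) + γ = x := by
              rw [hγ, add_assoc (x + β) α (α + β), ← add_assoc α α β, addself, zero_add,
                addaddself]
            exact (no_add hσi hxσ hx3 hγσ heq.symm).elim
        · rintro rfl
          exact ⟨hγσ, hγσ''⟩
      · ext x
        rw [mem_shift, Finset.mem_sdiff, Finset.mem_sdiff, Finset.mem_singleton,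
          Finset.mem_singleton]
        constructor
        · rintro ⟨hw, hwγ⟩
          have hxγ : x ≠ γ := by
            rintro rfl
            rw [addself] at hw
            exact ne_zero' hσi hw rfl
          refine ⟨?_, hxγ⟩
          by_cases hwα : x + γ = α
          · have hxb : x = β := by
              rw [← addaddself x γ, hwα, hγ, ← add_assoc, addself, zero_add]
            rw [hxb]; exact hβσ''
          · have h5 : x + γ ∈ σ \ {α} := Finset.mem_sdiff.mpr ⟨hw, by simpa using hwα⟩
            have h6 : x + γ + α ∈ σ' \ {α} := by rw [← h2, mem_shift, addaddself]; exact h5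
            have h7 : x + γ + α ≠ β := by
              intro hEq
              apply hwγ
              rw [← addaddself (x + γ) α, hEq, ← hγα', addaddself]
            have h8 : x + γ + α ∈ σ' \ {β} :=
              Finset.mem_sdiff.mpr ⟨(Finset.mem_sdiff.mp h6).1, by simpa using h7⟩
            have h9 : (x + γ + α) + β ∈ σ'' \ {β} := by
              rw [← h4, mem_shift, addaddself]; exact h8
            have hcalc : x + γ + α + β = x := by
              rw [← hγα', add_assoc x γ α, addaddself]
            rw [hcalc] at h9
            exact (Finset.mem_sdiff.mp h9).1
        · rintro ⟨hxσ'', hxγ⟩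
          refine ⟨?_, ?_⟩
          · by_cases hxβ : x = β
            · rw [hxβ, add_comm β γ, hγβa]; exact hασ
            · have h5 : x ∈ σ'' \ {β} := Finset.mem_sdiff.mpr ⟨hxσ'', by simpa using hxβ⟩
              rw [← h4, mem_shift] at h5
              have h6 : x + β ≠ α := by
                intro hEq
                apply hxγ
                rw [← addaddself x β, hEq, ← hγ]
              have h7 : x + β ∈ σ' \ {α} :=
                Finset.mem_sdiff.mpr ⟨(Finset.mem_sdiff.mp h5).1, by simpa using h6⟩
              rw [← h2, mem_shift] at h7
              have hcalc : x + β + α = x + γ := by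
                rw [add_assoc x β α, hβα2]
              rw [hcalc] at h7
              exact (Finset.mem_sdiff.mp h7).1
          · intro hEq
            apply ne_zero' hσ''i hxσ''
            rw [← addaddself x γ, hEq, addself]
end

section
/- For p > 0, each equivalence class of p-simplices of X(Z_2^n) under the relation ~ contains exactly p + 2 simplices. -/
/-!
For `α ∈ σ` let `flipAt σ α = {α} ∪ ((σ \ {α}) + α)`. A simplex `σ' ≠ σ` with `σ ~ σ'` is forced
to be `flipAt σ α`, where `σ ∩ σ' = {α}`. Conversely every flip is again a `p`-simplex related
to `σ`: it spans the same subspace as `σ` with the same number of vectors, and it meets `σ` only in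
`α` because `s + α ∈ σ` would be a linear dependence among at most three vectors of `σ`. Since the
flip remembers `α` as `σ ∩ flipAt σ α`, the `p + 1` flips are distinct, and none equals `σ` once
`σ` has at least two vertices.
-/

open Finset

attribute [local instance] Classical.propDecidable

namespace V

variable {n : ℕ}

theorem add_self (x : V n) : x + x = 0 :=
  funext fun i => CharTwo.add_self_eq_zero (x i)

theorem add_add_cancel_right (x y : V n) : x + y + y = x := by
  rw [add_assoc, add_self, add_zero]

end V

namespace LinIndep

variable {n : ℕ} {σ : Finset (V n)}

theorem linearIndepOn (h : LinIndep σ) : LinearIndepOn (ZMod 2) id (σ : Set (V n)) :=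
  h

theorem zero_notMem (h : LinIndep σ) : (0 : V n) ∉ σ := by
  simpa using h.linearIndepOn.zero_notMem_image

theorem add_notMem {α s : V n} (h : LinIndep σ) (hα : α ∈ σ) (hs : s ∈ σ) :
    s + α ∉ σ := by
  intro hx
  have hne_α : s + α ≠ α := fun e => h.zero_notMem (add_eq_right.mp e ▸ hs)
  have hne_s : s + α ≠ s := fun e => h.zero_notMem (add_eq_left.mp e ▸ hα)
  have hpair : ({s, α} : Set (V n)) ⊆ σ := Set.insert_subset hs (Set.singleton_subset_iff.mpr hα)
  have hspan : s + α ∉ Submodule.span (ZMod 2) {s, α} :=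
    ((h.linearIndepOn.mono hpair).notMem_span_iff_id).mpr
      ⟨h.linearIndepOn.mono (Set.insert_subset hx hpair), by simp [hne_α, hne_s]⟩
  exact hspan (Submodule.add_mem _ (Submodule.subset_span (by simp))
    (Submodule.subset_span (by simp)))

theorem of_span_eq {τ : Finset (V n)} (h : LinIndep σ)
    (hspan : Submodule.span (ZMod 2) (τ : Set (V n)) = Submodule.span (ZMod 2) σ)
    (hcard : τ.card = σ.card) : LinIndep τ := by
  rw [LinIndep, linearIndependent_iff_card_eq_finrank_span, Set.finrank, Subtype.range_coe, hspan]
  simp only [Finset.coe_sort_coe, Fintype.card_coe, hcard]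
  exact (finrank_span_finset_eq_card h.linearIndepOn).symm

end LinIndep

section Flip

variable {n : ℕ} {σ : Finset (V n)} {α : V n}

def flipAt (σ : Finset (V n)) (α : V n) : Finset (V n) :=
  insert α (shift (σ \ {α}) α)

theorem disjoint_shift (h : LinIndep σ) (hα : α ∈ σ) : Disjoint σ (shift (σ \ {α}) α) := by
  rw [disjoint_right]
  intro x hx
  obtain ⟨s, hs, rfl⟩ := mem_image.mp hx
  exact h.add_notMem hα (mem_sdiff.mp hs).1

theorem flipAt_sdiff_singleton (h : LinIndep σ) (hα : α ∈ σ) :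
    flipAt σ α \ {α} = shift (σ \ {α}) α := by
  rw [flipAt, sdiff_singleton_eq_erase, erase_insert (disjoint_left.mp (disjoint_shift h hα) hα)]

theorem inter_flipAt (h : LinIndep σ) (hα : α ∈ σ) : σ ∩ flipAt σ α = {α} := by
  rw [flipAt, inter_insert_of_mem hα, disjoint_iff_inter_eq_empty.mp (disjoint_shift h hα)]
  rfl

theorem card_flipAt (h : LinIndep σ) (hα : α ∈ σ) : (flipAt σ α).card = σ.card := by
  rw [flipAt, card_insert_of_notMem (disjoint_left.mp (disjoint_shift h hα) hα), shift,
    card_image_of_injective _ (add_left_injective α), sdiff_singleton_eq_erase,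
    card_erase_add_one hα]

theorem span_flipAt (hα : α ∈ σ) :
    Submodule.span (ZMod 2) (flipAt σ α : Set (V n)) = Submodule.span (ZMod 2) σ := by
  have hα' : α ∈ flipAt σ α := mem_insert_self _ _
  apply Submodule.span_eq_span
  · intro x hx
    rcases mem_insert.mp hx with rfl | hx
    · exact Submodule.subset_span hα
    · obtain ⟨s, hs, rfl⟩ := mem_image.mp hx
      exact add_mem (Submodule.subset_span (mem_sdiff.mp hs).1) (Submodule.subset_span hα)
  · intro x hx
    by_cases hxα : x = α
    · rw [hxα]
      exact Submodule.subset_span hα'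
    · have hxα_mem : x + α ∈ flipAt σ α :=
        mem_insert_of_mem (mem_image_of_mem _ (mem_sdiff.mpr ⟨hx, by simpa using hxα⟩))
      rw [← V.add_add_cancel_right x α]
      exact add_mem (Submodule.subset_span hxα_mem) (Submodule.subset_span hα')

theorem IsSimplex.flipAt {p : ℕ} (h : IsSimplex n p σ) (hα : α ∈ σ) :
    IsSimplex n p (flipAt σ α) :=
  ⟨(card_flipAt h.2 hα).trans h.1, h.2.of_span_eq (span_flipAt hα) (card_flipAt h.2 hα)⟩

theorem flipAt_injOn (h : LinIndep σ) : Set.InjOn (flipAt σ) σ := fun _ ha _ hb hab =>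
  singleton_injective ((inter_flipAt h ha).symm.trans (hab ▸ inter_flipAt h hb))

theorem flipAt_ne_self (h : LinIndep σ) (hα : α ∈ σ) (hσ : 1 < σ.card) : flipAt σ α ≠ σ := by
  intro hflip
  have := inter_flipAt h hα
  rw [hflip, inter_self] at this
  simp [this] at hσ

theorem simpRel_iff (h : LinIndep σ) {σ' : Finset (V n)} :
    SimpRel σ σ' ↔ σ' = σ ∨ ∃ α ∈ σ, flipAt σ α = σ' := by
  constructor
  · rintro (rfl | ⟨α, hinter, hshift⟩)
    · exact Or.inl rfl
    · have hα : α ∈ σ ∩ σ' := hinter ▸ mem_singleton_self α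
      refine Or.inr ⟨α, (mem_inter.mp hα).1, ?_⟩
      rw [flipAt, hshift, sdiff_singleton_eq_erase, insert_erase (mem_inter.mp hα).2]
  · rintro (rfl | ⟨α, hα, rfl⟩)
    · exact Or.inl rfl
    · exact Or.inr ⟨α, inter_flipAt h hα, (flipAt_sdiff_singleton h hα).symm⟩

theorem setOf_isSimplex_simpRel {p : ℕ} (hσ : IsSimplex n p σ) :
    {σ' | IsSimplex n p σ' ∧ SimpRel σ σ'} = ↑(insert σ (σ.image (flipAt σ))) := by
  ext σ'
  simp only [Set.mem_ofPred_eq, simpRel_iff hσ.2, coe_insert, coe_image, Set.mem_insert_iff,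
    Set.mem_image, mem_coe]
  constructor
  · rintro ⟨-, hrel⟩
    exact hrel
  · rintro (rfl | ⟨α, hα, rfl⟩)
    · exact ⟨hσ, Or.inl rfl⟩
    · exact ⟨hσ.flipAt hα, Or.inr ⟨α, hα, rfl⟩⟩

end Flip

/-- for `p > 0`, each equivalence class of `p`-simplices under `~`
contains exactly `p + 2` simplices. -/
theorem stmt1 (n p : ℕ) (hp : 0 < p) (σ : Finset (V n)) (hσ : IsSimplex n p σ) :
    {σ' : Finset (V n) | IsSimplex n p σ' ∧ SimpRel σ σ'}.ncard = p + 2 := by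
  have hσ_not_flip : σ ∉ σ.image (flipAt σ) := by
    intro hmem
    obtain ⟨α, hα, hflip⟩ := mem_image.mp hmem
    exact flipAt_ne_self hσ.2 hα (by rw [hσ.1]; omega) hflip
  rw [setOf_isSimplex_simpRel hσ, Set.ncard_coe_finset, card_insert_of_notMem hσ_not_flip,
    card_image_of_injOn (flipAt_injOn hσ.2), hσ.1]
end

section
/- Let σ = {α_1, ..., α_{p+1}} be a p-simplex of X(Z_2^n) with p ≥ 1, and let α_i, α_j be two distinct elements of σ. Then the p-simplices (σ \ {α_i}) + α_i and (σ \ {α_j}) + α_j are equivalent under ~; in particular their intersection is exactly {α_i + α_j}. -/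
open Finset

attribute [local instance] Classical.propDecidable

lemma Vadd_self {n : ℕ} (a : V n) : a + a = 0 :=
  funext fun i => CharTwo.add_self_eq_zero (a i)

lemma sum_four_ne_zero {n : ℕ} {σ : Finset (V n)} (h : LinIndep σ) {a b c d : V n}
    (ha : a ∈ σ) (hb : b ∈ σ) (hc : c ∈ σ) (hd : d ∈ σ)
    (hab : a ≠ b) (hac : a ≠ c) (had : a ≠ d) (hbc : b ≠ c) (hbd : b ≠ d) (hcd : c ≠ d) :
    a + b + c + d ≠ 0 := by
  intro h0
  rw [LinIndep, linearIndependent_iff'] at h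
  classical
  set A : (σ : Set (V n)) := ⟨a, ha⟩
  set B : (σ : Set (V n)) := ⟨b, hb⟩
  set C : (σ : Set (V n)) := ⟨c, hc⟩
  set D : (σ : Set (V n)) := ⟨d, hd⟩
  have hAB : A ≠ B := fun h' => hab (congrArg Subtype.val h')
  have hAC : A ≠ C := fun h' => hac (congrArg Subtype.val h')
  have hAD : A ≠ D := fun h' => had (congrArg Subtype.val h')
  have hBC : B ≠ C := fun h' => hbc (congrArg Subtype.val h')
  have hBD : B ≠ D := fun h' => hbd (congrArg Subtype.val h')
  have hCD : C ≠ D := fun h' => hcd (congrArg Subtype.val h')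
  have hsum : ∑ i ∈ ({A, B, C, D} : Finset (σ : Set (V n))),
      (fun _ => (1 : ZMod 2)) i • (i : V n) = 0 := by
    rw [Finset.sum_insert (by simp [hAB, hAC, hAD]),
        Finset.sum_insert (by simp [hBC, hBD]),
        Finset.sum_insert (by simp [hCD]), Finset.sum_singleton]
    simpa [← add_assoc] using h0
  have := h {A, B, C, D} (fun _ => 1) hsum A (by simp)
  exact one_ne_zero this


/-- for a `p`-simplex `σ` (`p ≥ 1`) and distinct `αi, αj ∈ σ`, the
`p`-simplices `(σ \ {αi}) + αi` and `(σ \ {αj}) + αj` are equivalent under `~`,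
and their intersection is exactly `{αi + αj}`. -/
theorem stmt3 (n p : ℕ) (hp : 1 ≤ p) (σ : Finset (V n)) (hσ : IsSimplex n p σ)
    (αi αj : V n) (hi : αi ∈ σ) (hj : αj ∈ σ) (hne : αi ≠ αj) :
    SimpRel (shift (σ \ {αi}) αi) (shift (σ \ {αj}) αj) ∧
    shift (σ \ {αi}) αi ∩ shift (σ \ {αj}) αj = {αi + αj} := by
  obtain ⟨-, hli⟩ := hσ
  set β := αi + αj with hβ
  -- the intersection
  have hint : shift (σ \ {αi}) αi ∩ shift (σ \ {αj}) αj = {β} := by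
    ext z
    simp only [Finset.mem_inter, shift, Finset.mem_image, Finset.mem_sdiff,
      Finset.mem_singleton]
    constructor
    · rintro ⟨⟨x, ⟨hx, hxi⟩, rfl⟩, ⟨y, ⟨hy, hyj⟩, hyz⟩⟩
      -- hyz : y + αj = x + αi
      suffices hxj : x = αj by rw [hxj, add_comm]
      by_contra hxj
      have hyi : y ≠ αi := by
        intro h
        apply hxj
        have h2 : x + αi = αj + αi := by rw [← hyz, h, add_comm]
        exact add_right_cancel h2
      have hxy : x ≠ y := by
        intro h
        rw [h] at hyz
        exact hne (add_left_cancel hyz).symm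
      have h0 : x + y + αi + αj = 0 := by
        have h1 : x + y + αi + αj = (x + αi) + (y + αj) := by ring
        rw [h1, hyz]
        exact Vadd_self _
      exact sum_four_ne_zero hli hx hy hi hj hxy hxi hxj hyi hyj hne h0
    · rintro rfl
      exact ⟨⟨αj, ⟨hj, fun h => hne h.symm⟩, by rw [add_comm]⟩, ⟨αi, ⟨hi, hne⟩, rfl⟩⟩
  refine ⟨Or.inr ⟨β, hint, ?_⟩, hint⟩
  -- shift equality
  ext z
  simp only [shift, Finset.mem_image, Finset.mem_sdiff, Finset.mem_singleton]
  constructor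
  · rintro ⟨w, ⟨⟨x, ⟨hx, hxi⟩, rfl⟩, hwβ⟩, rfl⟩
    have hxj : x ≠ αj := by rintro rfl; exact hwβ (by rw [hβ, add_comm])
    refine ⟨⟨x, ⟨hx, hxj⟩, ?_⟩, ?_⟩
    · rw [hβ, show x + αi + (αi + αj) = x + αj + (αi + αi) from by ring,
        Vadd_self, add_zero]
    · intro h
      exact hxi (by
        have : x + αi + β = αi + αj := h
        rw [hβ] at this
        have h2 : x + αj + (αi + αi) = αi + αj := by rw [← this]; ring
        rw [Vadd_self, add_zero] at h2
        exact add_right_cancel h2)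
  · rintro ⟨⟨y, ⟨hy, hyj⟩, rfl⟩, hzβ⟩
    have hyi : y ≠ αi := by rintro rfl; exact hzβ rfl
    refine ⟨y + αi, ⟨⟨y, ⟨hy, hyi⟩, rfl⟩, ?_⟩, ?_⟩
    · intro h
      rw [hβ] at h
      exact hyj (add_right_cancel (b := αi) (by rw [h]; ring : y + αi = αj + αi))
    · rw [hβ, show y + αi + (αi + αj) = y + αj + (αi + αi) by ring, Vadd_self, add_zero]
end

section
/- Let τ, τ' be faithful (n+1)-dimensional Z_2^n-representations containing a nonzero ρ ∈ Hom(Z_2^n, Z_2) with multiplicity exactly 2, say τ = ρ²ρ_2⋯ρ_n. Then τ' is equivalent to τ under ~_ρ if and only if τ' = ρ²ρ_2'⋯ρ_n' where each ρ_i' = ρ_i + ε_i ρ for some ε_i ∈ {0,1}. -/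
open Finset

attribute [local instance] Classical.propDecidable

/-- The element `[σ] ⊗ τ` of `D_p ⊗ C_q`, realized as the chain
`∑_{σ' ~ σ} (σ', τ)` on pairs of simplices. -/
noncomputable def pairClass {n : ℕ} (σ τ : Finset (V n)) :
    (Finset (V n) × Finset (V n)) →₀ ZMod 2 :=
  ∑ σ' ∈ Finset.univ.filter (fun σ' => SimpRel σ σ'), Finsupp.single (σ', τ) 1

/-- Monomials in `F_2[Hom(Z_2^n, Z_2)]`, viewed as multisets of linear functionals:
these model `Z_2^n`-representations. -/
abbrev Mon (n : ℕ) : Type := Multiset (Module.Dual (ZMod 2) (V n))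

/-- A faithful `(n+1)`-dimensional `Z_2^n`-representation: `n+1` nonzero
functionals which collectively span `Hom(Z_2^n, Z_2)`. -/
def Faithful (n : ℕ) (m : Mon n) : Prop :=
  Multiset.card m = n + 1 ∧ (0 : Module.Dual (ZMod 2) (V n)) ∉ m ∧
    Submodule.span (ZMod 2) {f : Module.Dual (ZMod 2) (V n) | f ∈ m} = ⊤

/-- The relation `~_ρ` on representations containing the nonzero functional `ρ` as a
factor: `τ ~_ρ τ'` iff writing `τ = ρ ρ_1 ⋯ ρ_n` and `τ' = ρ ρ_1' ⋯ ρ_n'` there is a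
matching (permutation) pairing each `ρ_i` with `ρ_i` or `ρ_i + ρ`. -/
def RhoRel {n : ℕ} (ρ : Module.Dual (ZMod 2) (V n)) (m m' : Mon n) : Prop :=
  ∃ s s' : Mon n, m = ρ ::ₘ s ∧ m' = ρ ::ₘ s' ∧
    Multiset.Rel (fun a b => b = a ∨ b = a + ρ) s s'

lemma key_lemma {m n : ℕ} (ρ : Module.Dual (ZMod 2) (V n))
    (r : Fin m → Module.Dual (ZMod 2) (V n)) :
    ∀ (s : Finset (Fin m)) (t : Mon n),
      Multiset.Rel (fun a b => b = a ∨ b = a + ρ) (s.val.map r) t →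
      ∃ ε : Fin m → ZMod 2, t = s.val.map (fun i => r i + ε i • ρ) := by
  intro s
  induction s using Finset.induction_on with
  | empty =>
      intro t h
      simp only [Finset.empty_val, Multiset.map_zero, Multiset.rel_zero_left] at h
      exact ⟨fun _ => 0, by simp [h]⟩
  | @insert a s ha ih =>
      intro t h
      rw [Finset.insert_val, Multiset.ndinsert_of_notMem (by simpa using ha),
        Multiset.map_cons, Multiset.rel_cons_left] at h
      obtain ⟨b, t', hb, ht', rfl⟩ := h
      obtain ⟨ε, rfl⟩ := ih t' ht'
      refine ⟨Function.update ε a (if b = r a then 0 else 1), ?_⟩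
      rw [Finset.insert_val, Multiset.ndinsert_of_notMem (by simpa using ha),
        Multiset.map_cons]
      congr 1
      · simp only [Function.update_self]
        by_cases hba : b = r a
        · rw [if_pos hba, zero_smul, add_zero]; exact hba
        · rcases hb with hb | hb
          · exact absurd hb hba
          · rw [if_neg hba, one_smul]; exact hb
      · apply Multiset.map_congr rfl
        intro i hi
        have : i ≠ a := by rintro rfl; exact ha hi
        simp [Function.update_of_ne this]

lemma rel_refl_of_forall {α : Type*} (R : α → α → Prop) (s : Multiset α)
    (h : ∀ a ∈ s, R a a) : Multiset.Rel R s s := by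
  induction s using Multiset.induction_on with
  | empty => exact Multiset.Rel.zero
  | cons a s ih =>
      exact Multiset.Rel.cons (h a (Multiset.mem_cons_self a s))
        (ih fun b hb => h b (Multiset.mem_cons_of_mem hb))

/-- let `τ = ρ²ρ_2⋯ρ_n` and `τ'` be faithful `(n+1)`-dimensional
representations containing `ρ ≠ 0` with multiplicity exactly `2` (here `n = m+1`).
Then `τ' ~_ρ τ` iff `τ' = ρ²ρ_2'⋯ρ_n'` with each `ρ_i' = ρ_i + ε_i ρ`, `ε_i ∈ {0,1}`. -/
theorem stmt11 (m : ℕ) (ρ : Module.Dual (ZMod 2) (V (m + 1))) (hρ : ρ ≠ 0)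
    (r : Fin m → Module.Dual (ZMod 2) (V (m + 1))) (τ' : Mon (m + 1))
    (hτ : Faithful (m + 1) (ρ ::ₘ ρ ::ₘ Multiset.map r Finset.univ.val))
    (hτ' : Faithful (m + 1) τ')
    (hcount : Multiset.count ρ (ρ ::ₘ ρ ::ₘ Multiset.map r Finset.univ.val) = 2)
    (hcount' : Multiset.count ρ τ' = 2) :
    RhoRel ρ (ρ ::ₘ ρ ::ₘ Multiset.map r Finset.univ.val) τ' ↔
      ∃ ε : Fin m → ZMod 2,
        τ' = ρ ::ₘ ρ ::ₘ Multiset.map (fun i => r i + ε i • ρ) Finset.univ.val := by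
  have hρρ : ρ + ρ = 0 := by
    rw [← two_smul (ZMod 2) ρ]
    have : (2 : ZMod 2) = 0 := by decide
    rw [this, zero_smul]
  constructor
  · rintro ⟨s, s', hs, hs', hrel⟩
    have hs2 : s = ρ ::ₘ Multiset.map r Finset.univ.val := by
      have := hs
      rw [Multiset.cons_inj_right] at this
      exact this.symm
    subst hs2
    rw [Multiset.rel_cons_left] at hrel
    obtain ⟨b, t', hb, ht', rfl⟩ := hrel
    have hbρ : b = ρ := by
      rcases hb with hb | hb
      · exact hb
      · exfalso
        rw [hb, hρρ] at hs'
        exact hτ'.2.1 (hs' ▸ Multiset.mem_cons_of_mem (Multiset.mem_cons_self 0 t'))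
    rw [hbρ] at hs'
    obtain ⟨ε, rfl⟩ := key_lemma ρ r Finset.univ t' ht'
    exact ⟨ε, hs'⟩
  · rintro ⟨ε, rfl⟩
    refine ⟨ρ ::ₘ Multiset.map r Finset.univ.val,
      ρ ::ₘ Multiset.map (fun i => r i + ε i • ρ) Finset.univ.val, rfl, rfl, ?_⟩
    refine Multiset.Rel.cons (Or.inl rfl) ?_
    rw [Multiset.rel_map_left, Multiset.rel_map_right]
    apply rel_refl_of_forall
    intro i _
    have : ε i = 0 ∨ ε i = 1 := by
      have : ∀ x : ZMod 2, x = 0 ∨ x = 1 := by decide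
      exact this (ε i)
    rcases this with h | h
    · left; simp [h]
    · right; simp [h]
end

section
/- For each nonzero ρ ∈ Hom(Z_2^n, Z_2), the relation ~_ρ defined on the set of faithful (n+1)-dimensional Z_2^n-representations containing ρ as a factor — τ ~_ρ τ' iff writing τ = ρρ_1⋯ρ_n, τ' = ρρ_1'⋯ρ_n' there is a permutation π ∈ S_n with ρ'_{π(i)} ∈ {ρ_i, ρ_i + ρ} for all i — is an equivalence relation, and equivalent representations have the same multiplicity of ρ: χ_ρ(τ) = χ_ρ(τ'). -/
open Finset

attribute [local instance] Classical.propDecidable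

lemma rho_add_self {n : ℕ} (ρ : Module.Dual (ZMod 2) (V n)) : ρ + ρ = 0 := by
  have h2 : (2 : ZMod 2) • ρ = 0 := by rw [show (2 : ZMod 2) = 0 by decide, zero_smul]
  rw [← h2, two_smul]

lemma rel_trans_aux {α : Type*} {r : α → α → Prop} (hr : Transitive r) :
    ∀ {s t u : Multiset α}, Multiset.Rel r s t → Multiset.Rel r t u → Multiset.Rel r s u := by
  intro s
  induction s using Multiset.induction with
  | empty =>
    intro t u h1 h2
    rw [Multiset.rel_zero_left] at h1
    subst h1
    rw [Multiset.rel_zero_left] at h2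
    subst h2
    exact Multiset.Rel.zero
  | cons a s ih =>
    intro t u h1 h2
    obtain ⟨b, t', hab, h1', rfl⟩ := Multiset.rel_cons_left.mp h1
    obtain ⟨c, u', hbc, h2', rfl⟩ := Multiset.rel_cons_left.mp h2
    exact Multiset.Rel.cons (hr hab hbc) (ih h1' h2')

lemma count_rel_aux {n : ℕ} (ρ : Module.Dual (ZMod 2) (V n)) (hρ : ρ ≠ 0)
    {s s' : Mon n} (h : Multiset.Rel (fun a b => b = a ∨ b = a + ρ) s s')
    (h0 : (0 : Module.Dual (ZMod 2) (V n)) ∉ s)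
    (h0' : (0 : Module.Dual (ZMod 2) (V n)) ∉ s') :
    Multiset.count ρ s = Multiset.count ρ s' := by
  induction h with
  | zero => rfl
  | @cons a b s t hab _ ih =>
    have ha : a ≠ 0 := fun h => h0 (h ▸ Multiset.mem_cons_self a s)
    have hb : b ≠ 0 := fun h => h0' (h ▸ Multiset.mem_cons_self b t)
    have hiff : (ρ = a) ↔ (ρ = b) := by
      rcases hab with rfl | rfl
      · rfl
      · constructor
        · intro h; exfalso; apply hb; rw [← h, rho_add_self]
        · intro h; exfalso; apply ha
          have h2 : a = (a + ρ) + ρ := by rw [add_assoc, rho_add_self, add_zero]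
          rw [← h, rho_add_self] at h2
          exact h2
    rw [Multiset.count_cons, Multiset.count_cons,
      ih (fun h => h0 (Multiset.mem_cons_of_mem h)) (fun h => h0' (Multiset.mem_cons_of_mem h))]
    by_cases hca : ρ = a
    · rw [if_pos hca, if_pos (hiff.mp hca)]
    · rw [if_neg hca, if_neg (fun h => hca (hiff.mpr h))]

/-- for each nonzero `ρ ∈ Hom(Z_2^n, Z_2)`, the relation `~_ρ` on the set
of faithful `(n+1)`-dimensional representations containing `ρ` as a factor is an
equivalence relation (reflexive, symmetric, transitive on that set), and equivalent
representations have the same multiplicity of `ρ`. -/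
theorem stmt15 (n : ℕ) (ρ : Module.Dual (ZMod 2) (V n)) (hρ : ρ ≠ 0) :
    (∀ m : Mon n, Faithful n m → ρ ∈ m → RhoRel ρ m m) ∧
    (∀ m m' : Mon n, Faithful n m → Faithful n m' → ρ ∈ m → ρ ∈ m' →
      RhoRel ρ m m' → RhoRel ρ m' m) ∧
    (∀ m₁ m₂ m₃ : Mon n, Faithful n m₁ → Faithful n m₂ → Faithful n m₃ →
      ρ ∈ m₁ → ρ ∈ m₂ → ρ ∈ m₃ →
      RhoRel ρ m₁ m₂ → RhoRel ρ m₂ m₃ → RhoRel ρ m₁ m₃) ∧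
    (∀ m m' : Mon n, Faithful n m → Faithful n m' → ρ ∈ m → ρ ∈ m' →
      RhoRel ρ m m' → Multiset.count ρ m = Multiset.count ρ m') := by
  have htrans : Transitive (fun a b : Module.Dual (ZMod 2) (V n) => b = a ∨ b = a + ρ) := by
    intro a b c hab hbc
    rcases hab with rfl | rfl <;> rcases hbc with h | h
    · exact Or.inl h
    · exact Or.inr h
    · rw [h]; exact Or.inr rfl
    · rw [h, add_assoc, rho_add_self ρ, add_zero]; exact Or.inl rfl
  refine ⟨?_, ?_, ?_, ?_⟩
  · intro m _ hm
    obtain ⟨s, rfl⟩ := Multiset.exists_cons_of_mem hm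
    exact ⟨s, s, rfl, rfl, Multiset.rel_refl_of_refl_on (fun a _ => Or.inl rfl)⟩
  · rintro m m' _ _ _ _ ⟨s, s', h1, h2, hrel⟩
    refine ⟨s', s, h2, h1, ?_⟩
    have := Multiset.rel_flip.mpr hrel
    refine this.mono ?_
    intro a _ b _ hab
    have hab' : a = b ∨ a = b + ρ := hab
    rcases hab' with h | h
    · exact Or.inl h.symm
    · right; rw [h, add_assoc, rho_add_self ρ, add_zero]
  · rintro m₁ m₂ m₃ _ _ _ _ _ _ ⟨s₁, s₂, h1, h2, hrel⟩ ⟨t₂, t₃, h2', h3, hrel'⟩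
    have hst : s₂ = t₂ := by
      have := h2.symm.trans h2'
      exact (Multiset.cons_inj_right ρ).mp this
    subst hst
    exact ⟨s₁, t₃, h1, h3, rel_trans_aux htrans hrel hrel'⟩
  · rintro m m' hf hf' _ _ ⟨s, s', rfl, rfl, hrel⟩
    have h0 : (0 : Module.Dual (ZMod 2) (V n)) ∉ s :=
      fun h => hf.2.1 (Multiset.mem_cons_of_mem h)
    have h0' : (0 : Module.Dual (ZMod 2) (V n)) ∉ s' :=
      fun h => hf'.2.1 (Multiset.mem_cons_of_mem h)
    rw [Multiset.count_cons_self, Multiset.count_cons_self,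
      count_rel_aux ρ hρ hrel h0 h0']
end
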